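/- Let r be a closed g-term, p ∈ SCC(r), and σ a substitution list such that r[p]σ is closed. Let q₁, q₂ ∈ valid(r[p]) be positions that are locally closed in r[p] and satisfy ⟨r[p]⟩q₁ = ⟨r[p]⟩q₂. Then globalize_step(r, σ, r[p])[q₁] = globalize_step(r, σ, r[p])[q₂]. -/

import Mathlib

namespace HashAlpha

/-- g-terms: λ-terms with de Bruijn indices, extended with global variables `gvar t`. -/
inductive GTerm : Type
  | var : ℕ → GTerm
  | app : GTerm → GTerm → GTerm
  | lam : GTerm → GTerm
  | gvar : GTerm → GTerm
  deriving DecidableEq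

/-- A g-term is a pure λ-term if it contains no global variables. -/
def GTerm.IsPure : GTerm → Prop
  | .var _ => True
  | .app a b => a.IsPure ∧ b.IsPure
  | .lam a => a.IsPure
  | .gvar _ => False

/-- Directions for term positions: ↓, ↙, ↘. -/
inductive Dir : Type
  | down | left | right
  deriving DecidableEq

/-- A term position is a word over {↓, ↙, ↘}. -/
abbrev Pos := List Dir

/-- `|p|_λ`: the number of ↓'s in a position. -/
def lamDepth (p : Pos) : ℕ := p.count Dir.down

/-- Term indexing `t[p]` (partial; does not descend into global variables). -/
def GTerm.index : GTerm → Pos → Option GTerm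
  | t, [] => some t
  | .app a _, .left :: p => a.index p
  | .app _ b, .right :: p => b.index p
  | .lam a, .down :: p => a.index p
  | _, _ => none

/-- `valid(t)`: the set of positions where `t[p]` is defined. -/
def Valid (t : GTerm) : Set Pos := {p | (t.index p).isSome}

/-- `vars(t)`: positions of variables. -/
def Vars (t : GTerm) : Set Pos := {p | ∃ i, t.index p = some (.var i)}

/-- `free(t)`: positions of free variables. -/
def Free (t : GTerm) : Set Pos :=
  {p | ∃ i, t.index p = some (.var i) ∧ lamDepth p ≤ i}

/-- A term is closed if it has no free variables. -/
def Closed (t : GTerm) : Prop := Free t = ∅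

/-- `p` is locally closed in `t`: every free variable of `t[p]` is also free in `t`. -/
def LocallyClosed (t : GTerm) (p : Pos) : Prop :=
  p ∈ Valid t ∧ ∀ u, t.index p = some u → ∀ q ∈ Free u, p ++ q ∈ Free t

/-- Subtract `d0` from every free variable (`d` is the current binder depth). -/
def declift (d0 : ℕ) : GTerm → ℕ → GTerm
  | .var j, d => if d ≤ j then .var (j - d0) else .var j
  | .app a b, d => .app (declift d0 a d) (declift d0 b d)
  | .lam a, d => .lam (declift d0 a (d + 1))
  | .gvar a, _ => .gvar a

/-- The lift `⟨t⟩p`: equal to `t[p]` except every free variable of `t[p]` is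
decremented by `|p|_λ`. -/
def liftAt (t : GTerm) (p : Pos) : Option GTerm :=
  (t.index p).map (fun u => declift (lamDepth p) u 0)

/-- Transition labels: ↓, ↙, ↘ and ↑. -/
inductive Lab : Type
  | down | left | right | up
  deriving DecidableEq

def Lab.ofDir : Dir → Lab
  | .down => .down
  | .left => .left
  | .right => .right

/-- Transitions between term nodes. -/
inductive Trans : GTerm × Pos → Lab → GTerm × Pos → Prop
  | dir (t : GTerm) (p : Pos) (x : Dir) :
      (p ++ [x]) ∈ Valid t → Trans (t, p) (Lab.ofDir x) (t, p ++ [x])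
  | up (t : GTerm) (q r : Pos) :
      t.index (q ++ Dir.down :: r) = some (.var (lamDepth r)) →
      Trans (t, q ++ Dir.down :: r) Lab.up (t, q)

/-- `R` is a bisimulation. -/
def IsBisim (R : GTerm × Pos → GTerm × Pos → Prop) : Prop :=
  ∀ n₁ n₂, R n₁ n₂ → ∀ x : Lab,
    (∀ n₁', Trans n₁ x n₁' → ∃ n₂', Trans n₂ x n₂' ∧ R n₁' n₂') ∧
    (∀ n₂', Trans n₂ x n₂' → ∃ n₁', Trans n₁ x n₁' ∧ R n₁' n₂')

/-- Two nodes are bisimilar when some bisimulation relates them. -/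
def Bisim (n₁ n₂ : GTerm × Pos) : Prop := ∃ R, IsBisim R ∧ R n₁ n₂

/-- `(t, p)` is a term node: `t` is closed and `p ∈ valid(t)`. -/
def IsNode (t : GTerm) (p : Pos) : Prop := Closed t ∧ p ∈ Valid t

/-- A single fork between term nodes (let-abs rule or closed rule). -/
def SingleFork (n₁ n₂ : GTerm × Pos) : Prop :=
  (∃ t p q₁ q₂ r u,
      n₁ = (t, p ++ q₁ ++ r) ∧ n₂ = (t, p ++ q₂ ++ r) ∧
      IsNode t (p ++ q₁ ++ r) ∧ IsNode t (p ++ q₂ ++ r) ∧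
      t.index p = some u ∧ LocallyClosed u q₁ ∧ liftAt u q₁ = liftAt u q₂) ∨
  (∃ t₁ t₂ p₁ p₂ r u,
      n₁ = (t₁, p₁ ++ r) ∧ n₂ = (t₂, p₂ ++ r) ∧
      IsNode t₁ (p₁ ++ r) ∧ IsNode t₂ (p₂ ++ r) ∧
      t₁.index p₁ = some u ∧ Closed u ∧ t₂.index p₂ = some u)

/-- Fork equivalence: the transitive closure of single forks. -/
def ForkEquiv : GTerm × Pos → GTerm × Pos → Prop := Relation.TransGen SingleFork

/-- Shift free variables ≥ `c` up by `d`. -/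
def shiftAux (c d : ℕ) : GTerm → GTerm
  | .var j => if j < c then .var j else .var (j + d)
  | .app a b => .app (shiftAux c d a) (shiftAux c d b)
  | .lam a => .lam (shiftAux (c + 1) d a)
  | .gvar a => .gvar a

/-- Capture-avoiding substitution of free variable `i` by `u` (at current depth `d`). -/
def substAux (i : ℕ) (u : GTerm) : ℕ → GTerm → GTerm
  | d, .var j => if j = i + d then shiftAux 0 d u else .var j
  | d, .app a b => .app (substAux i u d a) (substAux i u d b)
  | d, .lam a => .lam (substAux i u (d + 1) a)
  | _, .gvar a => .gvar a

/-- `t[i := u]`: capture-avoiding substitution of variable `i` by `u` in `t`. -/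
def subst (i : ℕ) (u : GTerm) (t : GTerm) : GTerm := substAux i u 0 t

/-- Simultaneous capture-avoiding substitution of variable `i` by `σᵢ`
(at current depth `d`). -/
def msubstAux (σ : List GTerm) : ℕ → GTerm → GTerm
  | d, .var j =>
      if j < d then .var j else shiftAux 0 d (σ.getD (j - d) (.var (j - d)))
  | d, .app a b => .app (msubstAux σ d a) (msubstAux σ d b)
  | d, .lam a => .lam (msubstAux σ (d + 1) a)
  | _, .gvar a => .gvar a

/-- `tσ`: simultaneous substitution of each variable `i` by the `i`-th element of `σ`. -/
def msubst (σ : List GTerm) (t : GTerm) : GTerm := msubstAux σ 0 t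

/-- Term size (the term summary `|t|`); global variables count as leaves. -/
def gsize : GTerm → ℕ
  | .var _ => 1
  | .gvar _ => 1
  | .app a b => gsize a + gsize b + 1
  | .lam a => gsize a + 1

theorem gsize_shiftAux (c d : ℕ) (t : GTerm) : gsize (shiftAux c d t) = gsize t := by
  induction t generalizing c with
  | var j => simp only [shiftAux]; split <;> rfl
  | app a b iha ihb => simp [shiftAux, gsize, iha, ihb]
  | lam a ih => simp [shiftAux, gsize, ih]
  | gvar a => rfl

theorem gsize_substAux_gvar (i : ℕ) (w : GTerm) (d : ℕ) (t : GTerm) :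
    gsize (substAux i (.gvar w) d t) = gsize t := by
  induction t generalizing d with
  | var j => simp only [substAux]; split <;> rfl
  | app a b iha ihb => simp [substAux, gsize, iha, ihb]
  | lam a ih => simp [substAux, gsize, ih]
  | gvar a => rfl

theorem gsize_msubstAux (σ : List GTerm) (h : ∀ u ∈ σ, ∃ w, u = .gvar w)
    (d : ℕ) (t : GTerm) : gsize (msubstAux σ d t) = gsize t := by
  induction t generalizing d with
  | var j =>
    simp only [msubstAux]
    split
    · rfl
    · rw [gsize_shiftAux]
      rcases Nat.lt_or_ge (j - d) σ.length with hl | hl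
      · rw [List.getD_eq_getElem _ _ hl]
        obtain ⟨w, hw⟩ := h _ (List.getElem_mem hl)
        rw [hw]; rfl
      · rw [List.getD_eq_default _ _ hl]; rfl
  | app a b iha ihb => simp [msubstAux, gsize, iha, ihb]
  | lam a ih => simp [msubstAux, gsize, ih]
  | gvar a => rfl

theorem gsize_msubst (σ : List GTerm) (h : ∀ u ∈ σ, ∃ w, u = .gvar w)
    (t : GTerm) : gsize (msubst σ t) = gsize t :=
  gsize_msubstAux σ h 0 t

/-- The naive globalization procedure. -/
def globalizeNaive : GTerm → GTerm
  | .lam t => .lam (globalizeNaive (subst 0 (.gvar (.lam t)) t))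
  | .app t u => .app (globalizeNaive t) (globalizeNaive u)
  | .gvar t => .gvar t
  | .var i => .var i
termination_by t => gsize t
decreasing_by
  · simp only [subst, gsize_substAux_gvar, gsize]; omega
  · simp only [gsize]; omega
  · simp only [gsize]; omega

/-- The strongly connected component of a closed g-term: positions all of whose
nonempty prefixes index open terms. -/
def SCC (t : GTerm) : Set Pos :=
  {p | p ∈ Valid t ∧ ∀ p' u, p' ≠ [] → p' <+: p → t.index p' = some u → ¬ Closed u}

/-- `duplicates(t)`: strict subterms in the SCC of `t` whose term summary (size)
is not unique within the SCC. -/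
def duplicates (t : GTerm) : Set GTerm :=
  {u | ∃ p q v, p ∈ SCC t ∧ q ∈ SCC t ∧ p ≠ [] ∧ q ≠ [] ∧ p ≠ q ∧
      t.index p = some u ∧ t.index q = some v ∧ gsize u = gsize v}

open Classical in
mutual
/-- Efficient globalization. -/
noncomputable def globalize (r : GTerm) : GTerm :=
  globalizeScc r [] (by simp) r
termination_by (gsize r, 2)
decreasing_by
  apply Prod.Lex.right; omega

noncomputable def globalizeScc (r : GTerm) (σ : List GTerm)
    (h : ∀ u ∈ σ, ∃ w, u = GTerm.gvar w) : GTerm → GTerm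
  | .lam t => .lam (globalizeStep r (.gvar (.app r t) :: σ)
      (by
        intro u hu
        rcases List.mem_cons.mp hu with h' | h'
        · exact ⟨_, h'⟩
        · exact h u h') t)
  | .app t u => .app (globalizeStep r σ h t) (globalizeStep r σ h u)
  | .gvar t => .gvar t
  | .var i => msubst σ (.var i)
termination_by t => (gsize t, 1)
decreasing_by
  · apply Prod.Lex.left; simp only [gsize]; omega
  · apply Prod.Lex.left; simp only [gsize]; omega
  · apply Prod.Lex.left; simp only [gsize]; omega

noncomputable def globalizeStep (r : GTerm) (σ : List GTerm)
    (h : ∀ u ∈ σ, ∃ w, u = GTerm.gvar w) (t : GTerm) : GTerm :=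
  if Closed t ∨ t ∈ duplicates r then globalize (msubst σ t)
  else globalizeScc r σ h t
termination_by (gsize t, 3)
decreasing_by
  · rw [gsize_msubst σ h]; apply Prod.Lex.right; omega
  · apply Prod.Lex.right; omega
end

/-!
Along a path `q` into `u`, `globalizeStep` descends through the strongly connected component,
pushing a global variable onto `σ` at every λ it crosses; when it stops at a closed subterm or a
duplicate, it globalizes the substitution instance of that subterm, which is closed and is
globalized the same way. Hence, whenever `w = u[q]` is closed or a duplicate and its instance
`msubstAux σ |q|_λ w` is closed, the result at `q` is the globalization of that instance.

For a locally closed `q`, this instance is the subterm of the closed term `uσ` at `q`, hence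
closed, and every free variable of `w` points above `q`, so the instance depends only on the lift
`⟨u⟩q`. Equal lifts also have equal sizes and are closed or open together; in the open case
`p ++ q₁ ≠ p ++ q₂` are both SCC positions of `r`, so both subterms are duplicates.
-/

@[simp] theorem lamDepth_nil : lamDepth [] = 0 := rfl

@[simp] theorem lamDepth_cons_down (p : Pos) : lamDepth (.down :: p) = lamDepth p + 1 := by
  simp [lamDepth]

@[simp] theorem lamDepth_cons_left (p : Pos) : lamDepth (.left :: p) = lamDepth p := by
  simp [lamDepth]

@[simp] theorem lamDepth_cons_right (p : Pos) : lamDepth (.right :: p) = lamDepth p := by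
  simp [lamDepth]

@[simp] theorem lamDepth_append (p q : Pos) : lamDepth (p ++ q) = lamDepth p + lamDepth q :=
  List.count_append ..

theorem GTerm.index_append (t : GTerm) (p q : Pos) :
    t.index (p ++ q) = (t.index p).bind (·.index q) := by
  induction p generalizing t with
  | nil => simp [GTerm.index]
  | cons x p ih => cases t <;> cases x <;> simp [GTerm.index, ih]

theorem GTerm.index_append_of_index {t s : GTerm} {p : Pos} (h : t.index p = some s) (q : Pos) :
    t.index (p ++ q) = s.index q := by
  rw [t.index_append, h, Option.bind_some]

def GTerm.AllVars (P : ℕ → ℕ → Prop) : GTerm → ℕ → Prop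
  | .var j, d => P d j
  | .app a b, d => a.AllVars P d ∧ b.AllVars P d
  | .lam a, d => a.AllVars P (d + 1)
  | .gvar _, _ => True

theorem GTerm.allVars_iff {P : ℕ → ℕ → Prop} (t : GTerm) (d : ℕ) :
    t.AllVars P d ↔ ∀ z i, t.index z = some (.var i) → P (lamDepth z + d) i := by
  induction t generalizing d with
  | var j =>
    refine ⟨fun h z i hz => ?_, fun h => by simpa [AllVars] using h [] j rfl⟩
    cases z with
    | nil => cases hz; simpa [AllVars] using h
    | cons x z => simp [GTerm.index] at hz
  | app a b iha ihb =>
    simp only [AllVars, iha, ihb]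
    refine ⟨fun ⟨ha, hb⟩ z i hz => ?_, fun h => ⟨fun z i hz => ?_, fun z i hz => ?_⟩⟩
    · obtain _ | ⟨_ | _ | _, z⟩ := z <;>
        simp only [GTerm.index, Option.some.injEq, reduceCtorEq] at hz
      · simpa using ha _ i hz
      · simpa using hb _ i hz
    · simpa using h (.left :: z) i hz
    · simpa using h (.right :: z) i hz
  | lam a ih =>
    simp only [AllVars, ih]
    refine ⟨fun h z i hz => ?_, fun h z i hz => ?_⟩
    · obtain _ | ⟨_ | _ | _, z⟩ := z <;>
        simp only [GTerm.index, Option.some.injEq, reduceCtorEq] at hz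
      simpa [add_assoc, add_comm 1] using h _ i hz
    · simpa [add_assoc, add_comm 1] using h (.down :: z) i hz
  | gvar a =>
    refine ⟨fun _ z i hz => ?_, fun _ => trivial⟩
    obtain _ | ⟨_, z⟩ := z <;> simp [GTerm.index] at hz

theorem closed_iff_allVars (t : GTerm) : Closed t ↔ t.AllVars (fun e j => j < e) 0 := by
  simp only [Closed, Free, t.allVars_iff, Set.eq_empty_iff_forall_notMem, Set.mem_ofPred_eq]
  grind

theorem msubstAux_var {σ : List GTerm} (hσ : ∀ v ∈ σ, ∃ w, v = GTerm.gvar w) (D j : ℕ) :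
    msubstAux σ D (.var j) = if j < D then .var j else σ[j - D]?.getD (.var j) := by
  unfold msubstAux
  split_ifs with hj
  · rfl
  · cases h : σ[j - D]? with
    | none =>
      rw [List.getD_eq_default _ _ (List.getElem?_eq_none_iff.mp h)]
      simp only [shiftAux, Option.getD_none]
      grind
    | some v =>
      obtain ⟨hlt, rfl⟩ := List.getElem?_eq_some_iff.mp h
      obtain ⟨w, hw⟩ := hσ _ (List.getElem_mem hlt)
      rw [List.getD_eq_getElem _ _ hlt, hw]
      rfl

@[simp] theorem msubstAux_nil (D : ℕ) (t : GTerm) : msubstAux [] D t = t := by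
  induction t generalizing D with
  | var j => rw [msubstAux_var (by simp)]; simp
  | app a b iha ihb => simp [msubstAux, iha, ihb]
  | lam a ih => simp [msubstAux, ih]
  | gvar a => rfl

theorem eq_var_of_msubstAux_eq_var {σ : List GTerm} (hσ : ∀ v ∈ σ, ∃ w, v = GTerm.gvar w)
    {D i : ℕ} {t : GTerm} (h : msubstAux σ D t = .var i) : t = .var i := by
  cases t with
  | var j =>
    rw [msubstAux_var hσ] at h
    split_ifs at h with hj
    · exact h
    · cases hv : σ[j - D]? with
      | none => simpa [hv] using h
      | some v =>
        obtain ⟨w, rfl⟩ := hσ v (List.mem_of_getElem? hv)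
        simp [hv] at h
  | _ => simp [msubstAux] at h

theorem index_msubstAux {σ : List GTerm} (hσ : ∀ v ∈ σ, ∃ w, v = GTerm.gvar w)
    (q : Pos) (D : ℕ) (t : GTerm) :
    (msubstAux σ D t).index q = (t.index q).map (msubstAux σ (D + lamDepth q)) := by
  induction q generalizing D t with
  | nil => simp [GTerm.index]
  | cons x q ih =>
    cases t with
    | var j =>
      rw [msubstAux_var hσ]
      split_ifs
      · simp [GTerm.index]
      · cases hv : σ[j - D]? with
        | none => simp [GTerm.index]
        | some v =>
          obtain ⟨w, rfl⟩ := hσ v (List.mem_of_getElem? hv)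
          simp [GTerm.index]
    | app a b => cases x <;> simp [msubstAux, GTerm.index, ih]
    | lam a => cases x <;> simp [msubstAux, GTerm.index, ih, add_assoc, add_comm 1]
    | gvar a => simp [msubstAux, GTerm.index]

theorem index_msubst {σ : List GTerm} (hσ : ∀ v ∈ σ, ∃ w, v = GTerm.gvar w)
    {u w : GTerm} {q : Pos} (hw : u.index q = some w) :
    (msubst σ u).index q = some (msubstAux σ (lamDepth q) w) := by
  simp [msubst, index_msubstAux hσ, hw]

theorem msubstAux_cons_gvar {σ : List GTerm} (hσ : ∀ v ∈ σ, ∃ w, v = GTerm.gvar w)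
    (g : GTerm) (D : ℕ) (w : GTerm) (e : ℕ)
    (h : (msubstAux σ (D + e + 1) w).AllVars (fun e j => j < e) e) :
    msubstAux (.gvar g :: σ) (D + e) w = msubstAux σ (D + e + 1) w := by
  have hσ' : ∀ v ∈ GTerm.gvar g :: σ, ∃ w, v = GTerm.gvar w := by
    simpa using hσ
  induction w generalizing e with
  | var j =>
    rw [msubstAux_var hσ', msubstAux_var hσ]
    rcases lt_trichotomy j (D + e) with hj | rfl | hj
    · simp [hj, Nat.lt_succ_of_lt hj]
    · simp [msubstAux_var hσ, GTerm.AllVars] at h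
    · rw [if_neg (by omega), if_neg (by omega),
        show j - (D + e) = j - (D + e + 1) + 1 by omega, List.getElem?_cons_succ]
  | app a b iha ihb => exact congrArg₂ GTerm.app (iha e h.1) (ihb e h.2)
  | lam a ih => exact congrArg GTerm.lam (ih (e + 1) h)
  | gvar a => rfl

theorem gsize_declift (D : ℕ) (w : GTerm) (d : ℕ) : gsize (declift D w d) = gsize w := by
  induction w generalizing d with
  | var j => unfold declift; split_ifs <;> rfl
  | app a b iha ihb => simp [declift, gsize, iha, ihb]
  | lam a ih => simp [declift, gsize, ih]
  | gvar a => rfl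

theorem allVars_declift_iff {D d : ℕ} {w : GTerm}
    (hfree : w.AllVars (fun e j => j < e ∨ D + e ≤ j) d) :
    (declift D w d).AllVars (fun e j => j < e) d ↔ w.AllVars (fun e j => j < e) d := by
  induction w generalizing d with
  | var j =>
    simp only [GTerm.AllVars] at hfree
    unfold declift
    split_ifs <;> simp only [GTerm.AllVars]
    all_goals omega
  | app a b iha ihb => simp only [declift, GTerm.AllVars, iha hfree.1, ihb hfree.2]
  | lam a ih => exact ih hfree
  | gvar a => rfl

theorem msubstAux_add_eq_declift {σ : List GTerm} (hσ : ∀ v ∈ σ, ∃ w, v = GTerm.gvar w)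
    {D d : ℕ} {w : GTerm} (hfree : w.AllVars (fun e j => j < e ∨ D + e ≤ j) d)
    (hc : (msubstAux σ (D + d) w).AllVars (fun e j => j < e) d) :
    msubstAux σ (D + d) w = msubstAux σ d (declift D w d) := by
  induction w generalizing d with
  | var j =>
    simp only [GTerm.AllVars] at hfree
    rw [msubstAux_var hσ] at hc ⊢
    unfold declift
    rcases hfree with hj | hj
    · rw [if_pos (by omega), if_neg (by omega), msubstAux_var hσ, if_pos hj]
    · rw [if_neg (by omega), if_pos (by omega), msubstAux_var hσ, if_neg (by omega),
        show j - D - d = j - (D + d) by omega]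
      rw [if_neg (by omega)] at hc
      cases hv : σ[j - (D + d)]? with
      | none => simp [hv, GTerm.AllVars] at hc; omega
      | some v => rfl
  | app a b iha ihb =>
    exact congrArg₂ GTerm.app (iha hfree.1 hc.1) (ihb hfree.2 hc.2)
  | lam a ih => exact congrArg GTerm.lam (ih hfree hc)
  | gvar a => rfl

theorem msubstAux_eq_of_declift_eq {σ : List GTerm} (hσ : ∀ v ∈ σ, ∃ w, v = GTerm.gvar w)
    {D₁ D₂ : ℕ} {w₁ w₂ : GTerm}
    (hf₁ : w₁.AllVars (fun e j => j < e ∨ D₁ + e ≤ j) 0)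
    (hf₂ : w₂.AllVars (fun e j => j < e ∨ D₂ + e ≤ j) 0)
    (hc₁ : Closed (msubstAux σ D₁ w₁)) (hc₂ : Closed (msubstAux σ D₂ w₂))
    (hD : declift D₁ w₁ 0 = declift D₂ w₂ 0) :
    msubstAux σ D₁ w₁ = msubstAux σ D₂ w₂ := calc
  _ = msubstAux σ 0 (declift D₁ w₁ 0) :=
    msubstAux_add_eq_declift hσ hf₁ ((closed_iff_allVars _).mp hc₁)
  _ = msubstAux σ 0 (declift D₂ w₂ 0) := by rw [hD]
  _ = _ := (msubstAux_add_eq_declift hσ hf₂ ((closed_iff_allVars _).mp hc₂)).symm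

theorem free_of_index_append {t s : GTerm} {p z : Pos} (h : t.index p = some s)
    (hz : p ++ z ∈ Free t) : z ∈ Free s := by
  obtain ⟨i, hi, hle⟩ := hz
  rw [t.index_append_of_index h] at hi
  exact ⟨i, hi, by simp at hle; omega⟩

theorem Closed.of_locallyClosed {t s : GTerm} {q : Pos} (ht : Closed t)
    (hq : LocallyClosed t q) (hs : t.index q = some s) : Closed s :=
  Set.eq_empty_of_forall_notMem fun z hz => by
    simpa [show Free t = ∅ from ht] using hq.2 s hs z hz

theorem locallyClosed_msubst {σ : List GTerm} (hσ : ∀ v ∈ σ, ∃ w, v = GTerm.gvar w)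
    {u : GTerm} {q : Pos} (hq : LocallyClosed u q) : LocallyClosed (msubst σ u) q := by
  obtain ⟨w, hw⟩ := Option.isSome_iff_exists.mp hq.1
  have hidx := index_msubst hσ hw
  refine ⟨by simp [Valid, hidx], fun s hs z ⟨i, hz, hle⟩ => ?_⟩
  obtain rfl : s = msubstAux σ (lamDepth q) w := by simpa [hidx] using hs.symm
  obtain ⟨t, hwz, ht⟩ : ∃ t, w.index z = some t ∧ msubstAux σ _ t = .var i := by
    simpa [index_msubstAux hσ] using hz
  obtain rfl := eq_var_of_msubstAux_eq_var hσ ht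
  obtain ⟨i', hi', hle'⟩ := hq.2 w hw z ⟨i, hwz, hle⟩
  rw [u.index_append_of_index hw, hwz, Option.some_inj, GTerm.var.injEq] at hi'
  subst hi'
  exact ⟨i, by rw [(msubst σ u).index_append_of_index hidx, hz], hle'⟩

theorem LocallyClosed.allVars_free {u w : GTerm} {q : Pos} (hq : LocallyClosed u q)
    (hw : u.index q = some w) :
    w.AllVars (fun e j => j < e ∨ lamDepth q + e ≤ j) 0 := by
  refine (w.allVars_iff 0).mpr fun z i hz => ?_
  by_cases hb : i < lamDepth z + 0
  · exact .inl hb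
  · obtain ⟨i', hi', hle⟩ := hq.2 w hw z ⟨i, hz, by omega⟩
    rw [u.index_append_of_index hw, hz, Option.some_inj, GTerm.var.injEq] at hi'
    subst hi'
    exact .inr (by simpa using hle)

theorem LocallyClosed.not_closed_of_prefix {u w s : GTerm} {q a : Pos}
    (hq : LocallyClosed u q) (hw : u.index q = some w) (hopen : ¬Closed w)
    (ha : a <+: q) (hs : u.index a = some s) : ¬Closed s := by
  obtain ⟨z, hz⟩ := Set.nonempty_iff_ne_empty.mpr hopen
  obtain ⟨b, rfl⟩ := ha
  have hfree : a ++ (b ++ z) ∈ Free u := by simpa using hq.2 w hw z hz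
  exact Set.nonempty_iff_ne_empty.mp ⟨_, free_of_index_append hs hfree⟩

theorem mem_SCC_append {r u w : GTerm} {p q : Pos} (hp : p ∈ SCC r) (hu : r.index p = some u)
    (hq : LocallyClosed u q) (hw : u.index q = some w) (hopen : ¬Closed w) :
    p ++ q ∈ SCC r := by
  refine ⟨by simp [Valid, r.index_append_of_index hu, hw], fun p' s hne hp' hs => ?_⟩
  rcases List.prefix_or_prefix_of_prefix hp' (List.prefix_append p q) with hpp | ⟨a, rfl⟩
  · exact hp.2 p' s hne hpp hs
  · rw [r.index_append_of_index hu] at hs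
    exact hq.not_closed_of_prefix hw hopen ((List.prefix_append_right_inj p).mp hp') hs

theorem ne_nil_of_index_not_closed {r w : GTerm} {p : Pos} (hr : Closed r)
    (hw : r.index p = some w) (hopen : ¬Closed w) : p ≠ [] := by
  rintro rfl
  obtain rfl : r = w := by simpa [GTerm.index] using hw
  exact hopen hr

theorem mem_duplicates_of_gsize_eq {r u w₁ w₂ : GTerm} {p q₁ q₂ : Pos} (hr : Closed r)
    (hp : p ∈ SCC r) (hu : r.index p = some u) (hne : q₁ ≠ q₂)
    (hlc₁ : LocallyClosed u q₁) (hlc₂ : LocallyClosed u q₂)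
    (hw₁ : u.index q₁ = some w₁) (hw₂ : u.index q₂ = some w₂)
    (hopen₁ : ¬Closed w₁) (hopen₂ : ¬Closed w₂) (hsize : gsize w₁ = gsize w₂) :
    w₁ ∈ duplicates r := by
  have hi₁ : r.index (p ++ q₁) = some w₁ := by rw [r.index_append_of_index hu, hw₁]
  have hi₂ : r.index (p ++ q₂) = some w₂ := by rw [r.index_append_of_index hu, hw₂]
  exact ⟨p ++ q₁, p ++ q₂, w₂, mem_SCC_append hp hu hlc₁ hw₁ hopen₁,
    mem_SCC_append hp hu hlc₂ hw₂ hopen₂, ne_nil_of_index_not_closed hr hi₁ hopen₁,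
    ne_nil_of_index_not_closed hr hi₂ hopen₂, by simpa using hne, hi₁, hi₂, hsize⟩

theorem index_globalizeScc_cons {d : Dir} {y : Pos}
    (ih : ∀ r σ hσ u w, u.index y = some w → Closed w ∨ w ∈ duplicates r →
      Closed (msubstAux σ (lamDepth y) w) →
      (globalizeStep r σ hσ u).index y = some (globalize (msubstAux σ (lamDepth y) w)))
    (r : GTerm) {σ : List GTerm} (hσ : ∀ v ∈ σ, ∃ w, v = GTerm.gvar w) {u w : GTerm}
    (hw : u.index (d :: y) = some w) (hdup : Closed w ∨ w ∈ duplicates r)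
    (hc : Closed (msubstAux σ (lamDepth (d :: y)) w)) :
    (globalizeScc r σ hσ u).index (d :: y) =
      some (globalize (msubstAux σ (lamDepth (d :: y)) w)) := by
  cases u <;> cases d <;> simp only [GTerm.index, reduceCtorEq] at hw
  case app.left a b =>
    rw [globalizeScc]
    simpa only [GTerm.index, lamDepth_cons_left] using ih r σ hσ a w hw hdup hc
  case app.right a b =>
    rw [globalizeScc]
    simpa only [GTerm.index, lamDepth_cons_right] using ih r σ hσ b w hw hdup hc
  case lam.down t =>
    rw [globalizeScc]
    simp only [GTerm.index, lamDepth_cons_down] at hc ⊢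
    -- the new head of the substitution stands for the binder just crossed, which `w` cannot see
    have hcons := msubstAux_cons_gvar hσ (.app r t) (lamDepth y) w 0
      ((closed_iff_allVars _).mp hc)
    rw [← hcons] at hc ⊢
    exact ih _ _ _ t w hw hdup hc

theorem index_globalizeStep (q : Pos) : ∀ (r : GTerm) (σ : List GTerm)
    (hσ : ∀ v ∈ σ, ∃ w, v = GTerm.gvar w) (u w : GTerm), u.index q = some w →
    Closed w ∨ w ∈ duplicates r → Closed (msubstAux σ (lamDepth q) w) →
    (globalizeStep r σ hσ u).index q = some (globalize (msubstAux σ (lamDepth q) w)) := by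
  induction q with
  | nil =>
    intro r σ hσ u w hw hdup _
    obtain rfl : u = w := by simpa [GTerm.index] using hw
    rw [globalizeStep, if_pos hdup]
    simp [GTerm.index, msubst]
  | cons d y ih =>
    intro r σ hσ u w hw hdup hc
    rw [globalizeStep]
    split_ifs
    · -- `globalize (uσ)` restarts on the closed term `uσ`, in which the instance of `w` is closed
      rw [globalize]
      simpa using index_globalizeScc_cons ih _ (σ := []) (by simp) (index_msubst hσ hw) (.inl hc)
        (by simpa using hc)
    · exact index_globalizeScc_cons ih r hσ hw hdup hc

/-- locally closed positions with equal lifts are identified by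
`globalizeStep`. -/
theorem globalizeStep_lift_eq (r : GTerm) (hr : Closed r) (p : Pos)
    (hscc : p ∈ SCC r) (u : GTerm) (hu : r.index p = some u)
    (σ : List GTerm) (hσ : ∀ v ∈ σ, ∃ w, v = GTerm.gvar w)
    (hclosed : Closed (msubst σ u))
    (q₁ q₂ : Pos) (hq₁ : q₁ ∈ Valid u) (hq₂ : q₂ ∈ Valid u)
    (hlc₁ : LocallyClosed u q₁) (hlc₂ : LocallyClosed u q₂)
    (hlift : liftAt u q₁ = liftAt u q₂) :
    (globalizeStep r σ hσ u).index q₁ = (globalizeStep r σ hσ u).index q₂ := by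
  rcases eq_or_ne q₁ q₂ with rfl | hne
  · rfl
  obtain ⟨w₁, hw₁⟩ := Option.isSome_iff_exists.mp hq₁
  obtain ⟨w₂, hw₂⟩ := Option.isSome_iff_exists.mp hq₂
  have hD : declift (lamDepth q₁) w₁ 0 = declift (lamDepth q₂) w₂ 0 := by
    simpa [liftAt, hw₁, hw₂] using hlift
  have hc₁ := hclosed.of_locallyClosed (locallyClosed_msubst hσ hlc₁) (index_msubst hσ hw₁)
  have hc₂ := hclosed.of_locallyClosed (locallyClosed_msubst hσ hlc₂) (index_msubst hσ hw₂)
  have hf₁ := hlc₁.allVars_free hw₁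
  have hf₂ := hlc₂.allVars_free hw₂
  suffices h : (Closed w₁ ∨ w₁ ∈ duplicates r) ∧ (Closed w₂ ∨ w₂ ∈ duplicates r) by
    rw [index_globalizeStep q₁ r σ hσ u w₁ hw₁ h.1 hc₁,
      index_globalizeStep q₂ r σ hσ u w₂ hw₂ h.2 hc₂,
      msubstAux_eq_of_declift_eq hσ hf₁ hf₂ hc₁ hc₂ hD]
  have hclosed_iff : Closed w₁ ↔ Closed w₂ := by
    rw [closed_iff_allVars, closed_iff_allVars, ← allVars_declift_iff hf₁, hD,
      allVars_declift_iff hf₂]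
  by_cases h₁ : Closed w₁
  · exact ⟨.inl h₁, .inl (hclosed_iff.mp h₁)⟩
  have h₂ : ¬Closed w₂ := hclosed_iff.not.mp h₁
  have hsize : gsize w₁ = gsize w₂ := by
    rw [← gsize_declift (lamDepth q₁) w₁ 0, hD, gsize_declift]
  exact ⟨.inr <| mem_duplicates_of_gsize_eq hr hscc hu hne hlc₁ hlc₂ hw₁ hw₂ h₁ h₂ hsize,
    .inr <| mem_duplicates_of_gsize_eq hr hscc hu hne.symm hlc₂ hlc₁ hw₂ hw₁ h₂ h₁ hsize.symm⟩

end HashAlpha
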